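/- For every QΛ type derivation π, the partial function ⟦π⟧ computed by π is either always defined or always undefined: whether an initial state for a quantum register Q rewrites under →_π to a final state does not depend on Q, but only on π. -/

import Mathlib

namespace QL

/-- Types of the linear quantum λ-calculus QΛ: `A ::= B | A ⊸ B | A ⊗ B`. -/
inductive QType : Type
  | bit : QType
  | lolli : QType → QType → QType
  | tens : QType → QType → QType
  deriving DecidableEq

/-- A fixed finite set 𝒰 of unitary operators, each acting on `ℂ^(2^n)`
(indexed by `Fin n → Bool`) for its arity `n`. -/
structure GateSet where
  card : ℕ
  arity : Fin card → ℕ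
  arity_pos : ∀ g, 0 < arity g
  mat : ∀ g, Matrix (Fin (arity g) → Bool) (Fin (arity g) → Bool) ℂ
  unitary : ∀ g, mat g ∈ Matrix.unitaryGroup (Fin (arity g) → Bool) ℂ

/-- Terms of QΛ: variables, labelled bit constants `|b⟩ₙ`, constants `U` for the
unitary operators of the gate set, tensor pairs, applications and (pattern) abstractions. -/
inductive Term (G : GateSet) : Type
  | var : ℕ → Term G
  | bit : Bool → ℕ → Term G
  | gate : Fin G.card → Term G
  | tens : Term G → Term G → Term G
  | app : Term G → Term G → Term G
  | lam : ℕ → Term G → Term G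
  | lamPair : ℕ → ℕ → Term G → Term G
  deriving DecidableEq

/-- `B^n`, the n-fold tensor `B ⊗ … ⊗ B` (right associated). -/
def nTens : ℕ → QType
  | 0 => QType.bit
  | 1 => QType.bit
  | n + 2 => QType.tens QType.bit (nTens (n + 1))

/-- Linear environments: each variable is assigned a type at most once. -/
abbrev Env := ℕ → Option QType

def Env.empty : Env := fun _ => none
def Env.single (x : ℕ) (A : QType) : Env := fun y => if y = x then some A else none
def Env.updt (Γ : Env) (x : ℕ) (A : QType) : Env := fun y => if y = x then some A else Γ y
/-- Two environments assign types to disjoint sets of variables. -/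
def Env.Disj (Γ Δ : Env) : Prop := ∀ x, Γ x = none ∨ Δ x = none
def Env.union (Γ Δ : Env) : Env := fun x =>
  match Γ x with
  | some A => some A
  | none => Δ x

/-- Type derivations of QΛ (Fig. 1): `Deriv G Γ M A` is the type of derivations
of the judgement `Γ ⊢ M : A`.  Contexts are treated multiplicatively. -/
inductive Deriv (G : GateSet) : Env → Term G → QType → Type
  | ax (x : ℕ) (A : QType) : Deriv G (Env.single x A) (.var x) A
  | bit (b : Bool) (ℓ : ℕ) : Deriv G Env.empty (.bit b ℓ) .bit
  | gate (g : Fin G.card) :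
      Deriv G Env.empty (.gate g) (.lolli (nTens (G.arity g)) (nTens (G.arity g)))
  | lam {Γ : Env} {x : ℕ} {A B : QType} {M : Term G} (hx : Γ x = none)
      (d : Deriv G (Γ.updt x A) M B) : Deriv G Γ (.lam x M) (.lolli A B)
  | lamPair {Γ : Env} {x y : ℕ} {A B C : QType} {M : Term G}
      (hxy : x ≠ y) (hx : Γ x = none) (hy : Γ y = none)
      (d : Deriv G ((Γ.updt x A).updt y B) M C) :
      Deriv G Γ (.lamPair x y M) (.lolli (.tens A B) C)
  | app {Γ Δ : Env} {M N : Term G} {A B : QType} (h : Env.Disj Γ Δ)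
      (d : Deriv G Γ M (.lolli A B)) (e : Deriv G Δ N A) :
      Deriv G (Γ.union Δ) (.app M N) B
  | tens {Γ Δ : Env} {M N : Term G} {A B : QType} (h : Env.Disj Γ Δ)
      (d : Deriv G Γ M A) (e : Deriv G Δ N B) :
      Deriv G (Γ.union Δ) (.tens M N) (.tens A B)

/-! ## The token machine IAM(QΛ) -/

/-- A position in a judgement: either (the type of) a context variable, or the goal type. -/
inductive Slot : Type
  | ctx : ℕ → Slot
  | goal : Slot
  deriving DecidableEq

/-- An occurrence of the base type `B` in a type derivation: a path in the
derivation tree (choosing premises), a slot in the judgement reached, and a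
path inside the type occurrence sitting there (`false` = left, `true` = right). -/
abbrev Occ := List ℕ × Slot × List Bool

def liftOcc (i : ℕ) (o : Occ) : Occ := (i :: o.1, o.2.1, o.2.2)

/-- Polarity of an occurrence of `B` inside a type: `some true` for positive,
`some false` for negative, `none` if the path does not lead to a `B`. -/
def occPol : QType → List Bool → Option Bool
  | .bit, [] => some true
  | .lolli A _, false :: q => (occPol A q).map not
  | .lolli _ B, true :: q => occPol B q
  | .tens A _, false :: q => occPol A q
  | .tens _ B, true :: q => occPol B q
  | _, _ => none

/-- The path of the `k`-th `B` inside `B^m = nTens m`. -/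
def tensPath : ℕ → ℕ → List Bool
  | 0, _ => []
  | 1, _ => []
  | _ + 2, 0 => [false]
  | m + 2, k + 1 => true :: tensPath (m + 1) k

/-- The single-token transitions of the machine `A_π` (Fig. 3), moving one
occurrence of `B` through the typing rules of the derivation, in the direction
prescribed by its polarity.  (The synchronous moves at unitary axioms are part
of `Step` below.) -/
inductive Edge (G : GateSet) :
    ∀ {Γ : Env} {M : Term G} {A : QType}, Deriv G Γ M A → Occ → Occ → Prop
  -- (a_v)
  | ax_ctx {x : ℕ} {A : QType} {q : List Bool} (h : occPol A q = some true) :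
      Edge G (.ax x A) ([], .ctx x, q) ([], .goal, q)
  | ax_goal {x : ℕ} {A : QType} {q : List Bool} (h : occPol A q = some false) :
      Edge G (.ax x A) ([], .goal, q) ([], .ctx x, q)
  -- (I⊸¹)
  | lam_var_out {Γ : Env} {x : ℕ} {A B : QType} {M : Term G} (hx : Γ x = none)
      (d : Deriv G (Γ.updt x A) M B) {q : List Bool} (h : occPol A q = some false) :
      Edge G (.lam hx d) ([0], .ctx x, q) ([], .goal, false :: q)
  | lam_var_in {Γ : Env} {x : ℕ} {A B : QType} {M : Term G} (hx : Γ x = none)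
      (d : Deriv G (Γ.updt x A) M B) {q : List Bool} (h : occPol A q = some true) :
      Edge G (.lam hx d) ([], .goal, false :: q) ([0], .ctx x, q)
  | lam_body_out {Γ : Env} {x : ℕ} {A B : QType} {M : Term G} (hx : Γ x = none)
      (d : Deriv G (Γ.updt x A) M B) {q : List Bool} (h : occPol B q = some true) :
      Edge G (.lam hx d) ([0], .goal, q) ([], .goal, true :: q)
  | lam_body_in {Γ : Env} {x : ℕ} {A B : QType} {M : Term G} (hx : Γ x = none)
      (d : Deriv G (Γ.updt x A) M B) {q : List Bool} (h : occPol B q = some false) :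
      Edge G (.lam hx d) ([], .goal, true :: q) ([0], .goal, q)
  | lam_ctx_up {Γ : Env} {x : ℕ} {A B : QType} {M : Term G} (hx : Γ x = none)
      (d : Deriv G (Γ.updt x A) M B) {v : ℕ} {C : QType} {q : List Bool}
      (hv : Γ v = some C) (h : occPol C q = some true) :
      Edge G (.lam hx d) ([], .ctx v, q) ([0], .ctx v, q)
  | lam_ctx_down {Γ : Env} {x : ℕ} {A B : QType} {M : Term G} (hx : Γ x = none)
      (d : Deriv G (Γ.updt x A) M B) {v : ℕ} {C : QType} {q : List Bool}
      (hv : Γ v = some C) (h : occPol C q = some false) :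
      Edge G (.lam hx d) ([0], .ctx v, q) ([], .ctx v, q)
  -- (I⊸²)
  | lamPair_x_out {Γ : Env} {x y : ℕ} {A B C : QType} {M : Term G}
      (hxy : x ≠ y) (hx : Γ x = none) (hy : Γ y = none)
      (d : Deriv G ((Γ.updt x A).updt y B) M C) {q : List Bool}
      (h : occPol A q = some false) :
      Edge G (.lamPair hxy hx hy d) ([0], .ctx x, q) ([], .goal, false :: false :: q)
  | lamPair_x_in {Γ : Env} {x y : ℕ} {A B C : QType} {M : Term G}
      (hxy : x ≠ y) (hx : Γ x = none) (hy : Γ y = none)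
      (d : Deriv G ((Γ.updt x A).updt y B) M C) {q : List Bool}
      (h : occPol A q = some true) :
      Edge G (.lamPair hxy hx hy d) ([], .goal, false :: false :: q) ([0], .ctx x, q)
  | lamPair_y_out {Γ : Env} {x y : ℕ} {A B C : QType} {M : Term G}
      (hxy : x ≠ y) (hx : Γ x = none) (hy : Γ y = none)
      (d : Deriv G ((Γ.updt x A).updt y B) M C) {q : List Bool}
      (h : occPol B q = some false) :
      Edge G (.lamPair hxy hx hy d) ([0], .ctx y, q) ([], .goal, false :: true :: q)
  | lamPair_y_in {Γ : Env} {x y : ℕ} {A B C : QType} {M : Term G}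
      (hxy : x ≠ y) (hx : Γ x = none) (hy : Γ y = none)
      (d : Deriv G ((Γ.updt x A).updt y B) M C) {q : List Bool}
      (h : occPol B q = some true) :
      Edge G (.lamPair hxy hx hy d) ([], .goal, false :: true :: q) ([0], .ctx y, q)
  | lamPair_body_out {Γ : Env} {x y : ℕ} {A B C : QType} {M : Term G}
      (hxy : x ≠ y) (hx : Γ x = none) (hy : Γ y = none)
      (d : Deriv G ((Γ.updt x A).updt y B) M C) {q : List Bool}
      (h : occPol C q = some true) :
      Edge G (.lamPair hxy hx hy d) ([0], .goal, q) ([], .goal, true :: q)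
  | lamPair_body_in {Γ : Env} {x y : ℕ} {A B C : QType} {M : Term G}
      (hxy : x ≠ y) (hx : Γ x = none) (hy : Γ y = none)
      (d : Deriv G ((Γ.updt x A).updt y B) M C) {q : List Bool}
      (h : occPol C q = some false) :
      Edge G (.lamPair hxy hx hy d) ([], .goal, true :: q) ([0], .goal, q)
  | lamPair_ctx_up {Γ : Env} {x y : ℕ} {A B C : QType} {M : Term G}
      (hxy : x ≠ y) (hx : Γ x = none) (hy : Γ y = none)
      (d : Deriv G ((Γ.updt x A).updt y B) M C) {v : ℕ} {D : QType} {q : List Bool}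
      (hv : Γ v = some D) (h : occPol D q = some true) :
      Edge G (.lamPair hxy hx hy d) ([], .ctx v, q) ([0], .ctx v, q)
  | lamPair_ctx_down {Γ : Env} {x y : ℕ} {A B C : QType} {M : Term G}
      (hxy : x ≠ y) (hx : Γ x = none) (hy : Γ y = none)
      (d : Deriv G ((Γ.updt x A).updt y B) M C) {v : ℕ} {D : QType} {q : List Bool}
      (hv : Γ v = some D) (h : occPol D q = some false) :
      Edge G (.lamPair hxy hx hy d) ([0], .ctx v, q) ([], .ctx v, q)
  -- (E⊸)
  | app_arg_toFun {Γ Δ : Env} {M N : Term G} {A B : QType} (h : Env.Disj Γ Δ)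
      (d : Deriv G Γ M (.lolli A B)) (e : Deriv G Δ N A) {q : List Bool}
      (hq : occPol A q = some true) :
      Edge G (.app h d e) ([1], .goal, q) ([0], .goal, false :: q)
  | app_arg_toArg {Γ Δ : Env} {M N : Term G} {A B : QType} (h : Env.Disj Γ Δ)
      (d : Deriv G Γ M (.lolli A B)) (e : Deriv G Δ N A) {q : List Bool}
      (hq : occPol A q = some false) :
      Edge G (.app h d e) ([0], .goal, false :: q) ([1], .goal, q)
  | app_res_down {Γ Δ : Env} {M N : Term G} {A B : QType} (h : Env.Disj Γ Δ)
      (d : Deriv G Γ M (.lolli A B)) (e : Deriv G Δ N A) {q : List Bool}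
      (hq : occPol B q = some true) :
      Edge G (.app h d e) ([0], .goal, true :: q) ([], .goal, q)
  | app_res_up {Γ Δ : Env} {M N : Term G} {A B : QType} (h : Env.Disj Γ Δ)
      (d : Deriv G Γ M (.lolli A B)) (e : Deriv G Δ N A) {q : List Bool}
      (hq : occPol B q = some false) :
      Edge G (.app h d e) ([], .goal, q) ([0], .goal, true :: q)
  | app_ctxL_up {Γ Δ : Env} {M N : Term G} {A B : QType} (h : Env.Disj Γ Δ)
      (d : Deriv G Γ M (.lolli A B)) (e : Deriv G Δ N A) {v : ℕ} {C : QType}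
      {q : List Bool} (hv : Γ v = some C) (hq : occPol C q = some true) :
      Edge G (.app h d e) ([], .ctx v, q) ([0], .ctx v, q)
  | app_ctxL_down {Γ Δ : Env} {M N : Term G} {A B : QType} (h : Env.Disj Γ Δ)
      (d : Deriv G Γ M (.lolli A B)) (e : Deriv G Δ N A) {v : ℕ} {C : QType}
      {q : List Bool} (hv : Γ v = some C) (hq : occPol C q = some false) :
      Edge G (.app h d e) ([0], .ctx v, q) ([], .ctx v, q)
  | app_ctxR_up {Γ Δ : Env} {M N : Term G} {A B : QType} (h : Env.Disj Γ Δ)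
      (d : Deriv G Γ M (.lolli A B)) (e : Deriv G Δ N A) {v : ℕ} {C : QType}
      {q : List Bool} (hv : Δ v = some C) (hq : occPol C q = some true) :
      Edge G (.app h d e) ([], .ctx v, q) ([1], .ctx v, q)
  | app_ctxR_down {Γ Δ : Env} {M N : Term G} {A B : QType} (h : Env.Disj Γ Δ)
      (d : Deriv G Γ M (.lolli A B)) (e : Deriv G Δ N A) {v : ℕ} {C : QType}
      {q : List Bool} (hv : Δ v = some C) (hq : occPol C q = some false) :
      Edge G (.app h d e) ([1], .ctx v, q) ([], .ctx v, q)
  -- (I⊗)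
  | tens_left_in {Γ Δ : Env} {M N : Term G} {A B : QType} (h : Env.Disj Γ Δ)
      (d : Deriv G Γ M A) (e : Deriv G Δ N B) {q : List Bool}
      (hq : occPol A q = some false) :
      Edge G (.tens h d e) ([], .goal, false :: q) ([0], .goal, q)
  | tens_left_out {Γ Δ : Env} {M N : Term G} {A B : QType} (h : Env.Disj Γ Δ)
      (d : Deriv G Γ M A) (e : Deriv G Δ N B) {q : List Bool}
      (hq : occPol A q = some true) :
      Edge G (.tens h d e) ([0], .goal, q) ([], .goal, false :: q)
  | tens_right_in {Γ Δ : Env} {M N : Term G} {A B : QType} (h : Env.Disj Γ Δ)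
      (d : Deriv G Γ M A) (e : Deriv G Δ N B) {q : List Bool}
      (hq : occPol B q = some false) :
      Edge G (.tens h d e) ([], .goal, true :: q) ([1], .goal, q)
  | tens_right_out {Γ Δ : Env} {M N : Term G} {A B : QType} (h : Env.Disj Γ Δ)
      (d : Deriv G Γ M A) (e : Deriv G Δ N B) {q : List Bool}
      (hq : occPol B q = some true) :
      Edge G (.tens h d e) ([1], .goal, q) ([], .goal, true :: q)
  | tens_ctxL_up {Γ Δ : Env} {M N : Term G} {A B : QType} (h : Env.Disj Γ Δ)
      (d : Deriv G Γ M A) (e : Deriv G Δ N B) {v : ℕ} {C : QType} {q : List Bool}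
      (hv : Γ v = some C) (hq : occPol C q = some true) :
      Edge G (.tens h d e) ([], .ctx v, q) ([0], .ctx v, q)
  | tens_ctxL_down {Γ Δ : Env} {M N : Term G} {A B : QType} (h : Env.Disj Γ Δ)
      (d : Deriv G Γ M A) (e : Deriv G Δ N B) {v : ℕ} {C : QType} {q : List Bool}
      (hv : Γ v = some C) (hq : occPol C q = some false) :
      Edge G (.tens h d e) ([0], .ctx v, q) ([], .ctx v, q)
  | tens_ctxR_up {Γ Δ : Env} {M N : Term G} {A B : QType} (h : Env.Disj Γ Δ)
      (d : Deriv G Γ M A) (e : Deriv G Δ N B) {v : ℕ} {C : QType} {q : List Bool}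
      (hv : Δ v = some C) (hq : occPol C q = some true) :
      Edge G (.tens h d e) ([], .ctx v, q) ([1], .ctx v, q)
  | tens_ctxR_down {Γ Δ : Env} {M N : Term G} {A B : QType} (h : Env.Disj Γ Δ)
      (d : Deriv G Γ M A) (e : Deriv G Δ N B) {v : ℕ} {C : QType} {q : List Bool}
      (hv : Δ v = some C) (hq : occPol C q = some false) :
      Edge G (.tens h d e) ([1], .ctx v, q) ([], .ctx v, q)
  -- lifting of transitions of subderivations
  | lift_lam {Γ : Env} {x : ℕ} {A B : QType} {M : Term G} (hx : Γ x = none)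
      (d : Deriv G (Γ.updt x A) M B) {o o' : Occ} :
      Edge G d o o' → Edge G (.lam hx d) (liftOcc 0 o) (liftOcc 0 o')
  | lift_lamPair {Γ : Env} {x y : ℕ} {A B C : QType} {M : Term G}
      (hxy : x ≠ y) (hx : Γ x = none) (hy : Γ y = none)
      (d : Deriv G ((Γ.updt x A).updt y B) M C) {o o' : Occ} :
      Edge G d o o' → Edge G (.lamPair hxy hx hy d) (liftOcc 0 o) (liftOcc 0 o')
  | lift_app_left {Γ Δ : Env} {M N : Term G} {A B : QType} (h : Env.Disj Γ Δ)
      (d : Deriv G Γ M (.lolli A B)) (e : Deriv G Δ N A) {o o' : Occ} :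
      Edge G d o o' → Edge G (.app h d e) (liftOcc 0 o) (liftOcc 0 o')
  | lift_app_right {Γ Δ : Env} {M N : Term G} {A B : QType} (h : Env.Disj Γ Δ)
      (d : Deriv G Γ M (.lolli A B)) (e : Deriv G Δ N A) {o o' : Occ} :
      Edge G e o o' → Edge G (.app h d e) (liftOcc 1 o) (liftOcc 1 o')
  | lift_tens_left {Γ Δ : Env} {M N : Term G} {A B : QType} (h : Env.Disj Γ Δ)
      (d : Deriv G Γ M A) (e : Deriv G Δ N B) {o o' : Occ} :
      Edge G d o o' → Edge G (.tens h d e) (liftOcc 0 o) (liftOcc 0 o')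
  | lift_tens_right {Γ Δ : Env} {M N : Term G} {A B : QType} (h : Env.Disj Γ Δ)
      (d : Deriv G Γ M A) (e : Deriv G Δ N B) {o o' : Occ} :
      Edge G e o o' → Edge G (.tens h d e) (liftOcc 1 o) (liftOcc 1 o')

/-- `GateAt G d p g` holds when the axiom `(a_U)` for the unitary `g` occurs
at path `p` in the derivation `d`. -/
inductive GateAt (G : GateSet) :
    ∀ {Γ : Env} {M : Term G} {A : QType}, Deriv G Γ M A → List ℕ → Fin G.card → Prop
  | here (g : Fin G.card) : GateAt G (.gate g) [] g
  | in_lam {Γ : Env} {x : ℕ} {A B : QType} {M : Term G} (hx : Γ x = none)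
      (d : Deriv G (Γ.updt x A) M B) {p : List ℕ} {g : Fin G.card} :
      GateAt G d p g → GateAt G (.lam hx d) (0 :: p) g
  | in_lamPair {Γ : Env} {x y : ℕ} {A B C : QType} {M : Term G}
      (hxy : x ≠ y) (hx : Γ x = none) (hy : Γ y = none)
      (d : Deriv G ((Γ.updt x A).updt y B) M C) {p : List ℕ} {g : Fin G.card} :
      GateAt G d p g → GateAt G (.lamPair hxy hx hy d) (0 :: p) g
  | in_app_left {Γ Δ : Env} {M N : Term G} {A B : QType} (h : Env.Disj Γ Δ)
      (d : Deriv G Γ M (.lolli A B)) (e : Deriv G Δ N A) {p : List ℕ} {g : Fin G.card} :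
      GateAt G d p g → GateAt G (.app h d e) (0 :: p) g
  | in_app_right {Γ Δ : Env} {M N : Term G} {A B : QType} (h : Env.Disj Γ Δ)
      (d : Deriv G Γ M (.lolli A B)) (e : Deriv G Δ N A) {p : List ℕ} {g : Fin G.card} :
      GateAt G e p g → GateAt G (.app h d e) (1 :: p) g
  | in_tens_left {Γ Δ : Env} {M N : Term G} {A B : QType} (h : Env.Disj Γ Δ)
      (d : Deriv G Γ M A) (e : Deriv G Δ N B) {p : List ℕ} {g : Fin G.card} :
      GateAt G d p g → GateAt G (.tens h d e) (0 :: p) g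
  | in_tens_right {Γ Δ : Env} {M N : Term G} {A B : QType} (h : Env.Disj Γ Δ)
      (d : Deriv G Γ M A) (e : Deriv G Δ N B) {p : List ℕ} {g : Fin G.card} :
      GateAt G e p g → GateAt G (.tens h d e) (1 :: p) g

/-- A quantum register on `n` quantum bits: a vector in `ℂ^(2^n)`
(with its Euclidean/L² norm). -/
abbrev Reg (n : ℕ) : Type := EuclideanSpace ℂ (Fin n → Bool)

/-- `U^{i₁,…,iₘ}`: the operator on `n` qubits acting like `U = mat g` on the
qubits at the (distinct) positions `ι 0, …, ι (m-1)` and as the identity elsewhere. -/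
def liftMat (G : GateSet) (g : Fin G.card) {n : ℕ} (ι : Fin (G.arity g) → Fin n) :
    Matrix (Fin n → Bool) (Fin n → Bool) ℂ :=
  fun f f' =>
    if ∀ j, (∀ k, ι k ≠ j) → f j = f' j then G.mat g (f ∘ ι) (f' ∘ ι) else 0

/-- States of the token machine: a number `n` of tokens, the occurrences at
which the `n` tokens currently sit, and a quantum register on `n` qubits. -/
def TMState : Type := Σ n : ℕ, (Fin n → Occ) × Reg n

/-- A state of `A_π` has a normalised quantum register. -/
def Normalised (s : TMState) : Prop := ‖s.2.2‖ = 1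

/-- The transition relation `→_π` of the machine `A_π`: either a single token
moves along an `Edge`, or the `m` tokens sitting at the argument occurrences of
a unitary axiom of arity `m` synchronously move to its result occurrences while
the operator is applied to the register. -/
inductive Step (G : GateSet) {Γ : Env} {M : Term G} {A : QType} (d : Deriv G Γ M A) :
    TMState → TMState → Prop
  | single {n : ℕ} (toks : Fin n → Occ) (Q : Reg n) (i : Fin n) (o' : Occ)
      (h : Edge G d (toks i) o') :
      Step G d ⟨n, toks, Q⟩ ⟨n, Function.update toks i o', Q⟩
  | sync {n : ℕ} (toks toks' : Fin n → Occ) (Q : Reg n) {p : List ℕ} {g : Fin G.card}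
      (hg : GateAt G d p g) (ι : Fin (G.arity g) → Fin n) (hinj : Function.Injective ι)
      (harg : ∀ k, toks (ι k) = (p, .goal, false :: tensPath (G.arity g) (k : ℕ)))
      (hres : ∀ k, toks' (ι k) = (p, .goal, true :: tensPath (G.arity g) (k : ℕ)))
      (hoth : ∀ j, (∀ k, ι k ≠ j) → toks' j = toks j) :
      Step G d ⟨n, toks, Q⟩ ⟨n, toks', (WithLp.toLp 2 ((liftMat G g ι).mulVec Q) : Reg n)⟩

/-! ## Initial and final states, and the function computed by a derivation -/

mutual
  /-- The sequence `Occ⁺(A)` of positive occurrences of `B` in a type. -/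
  def poccs : QType → List (List Bool)
    | .bit => [[]]
    | .lolli A B => (noccs A).map (List.cons false) ++ (poccs B).map (List.cons true)
    | .tens A B => (poccs A).map (List.cons false) ++ (poccs B).map (List.cons true)
  /-- The sequence `Occ⁻(A)` of negative occurrences of `B` in a type. -/
  def noccs : QType → List (List Bool)
    | .bit => []
    | .lolli A B => (poccs A).map (List.cons false) ++ (noccs B).map (List.cons true)
    | .tens A B => (noccs A).map (List.cons false) ++ (noccs B).map (List.cons true)
end

/-- The occurrences of `B` introduced by the bit axioms of a derivation,
together with the label and the value of the corresponding bit constant. -/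
def bitsOf {Γ : Env} : {M : Term G} → {A : QType} → Deriv G Γ M A → List (List ℕ × ℕ × Bool)
  | _, _, .ax _ _ => []
  | _, _, .bit b ℓ => [([], ℓ, b)]
  | _, _, .gate _ => []
  | _, _, .lam _ d => (bitsOf d).map (fun t => (0 :: t.1, t.2))
  | _, _, .lamPair _ _ _ d => (bitsOf d).map (fun t => (0 :: t.1, t.2))
  | _, _, .app _ d e =>
      (bitsOf d).map (fun t => (0 :: t.1, t.2)) ++ (bitsOf e).map (fun t => (1 :: t.1, t.2))
  | _, _, .tens _ d e =>
      (bitsOf d).map (fun t => (0 :: t.1, t.2)) ++ (bitsOf e).map (fun t => (1 :: t.1, t.2))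

/-- `B(π)`: the bit occurrences of `π`, ordered by the labels of the underlying bits. -/
def sortedBits {Γ : Env} {M : Term G} {A : QType} (d : Deriv G Γ M A) :
    List (List ℕ × ℕ × Bool) :=
  List.insertionSort (fun a b => a.2.1 ≤ b.2.1) (bitsOf d)

/-- The sequence of input (i.e. sequent-negative) occurrences of the conclusion of a
derivation of `Γ ⊢ M : A`, where `D` enumerates the domain of `Γ`: the positive
occurrences of the context types (in variable order) followed by `Occ⁻(A)`. -/
def inList (D : Finset ℕ) (Γ : Env) (A : QType) : List Occ :=
  (D.sort (· ≤ ·)).foldr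
    (fun v acc =>
      (match Γ v with
        | some C => (poccs C).map (fun q => (([] : List ℕ), Slot.ctx v, q))
        | none => []) ++ acc)
    ((noccs A).map (fun q => (([] : List ℕ), Slot.goal, q)))

/-- The sequence of output (i.e. sequent-positive) occurrences of the conclusion. -/
def outList (D : Finset ℕ) (Γ : Env) (A : QType) : List Occ :=
  (D.sort (· ≤ ·)).foldr
    (fun v acc =>
      (match Γ v with
        | some C => (noccs C).map (fun q => (([] : List ℕ), Slot.ctx v, q))
        | none => []) ++ acc)
    ((poccs A).map (fun q => (([] : List ℕ), Slot.goal, q)))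

/-- Tokens of an initial state: `Occ⁻(A) · B(π)`. -/
def initToks (D : Finset ℕ) {Γ : Env} {M : Term G} {A : QType} (d : Deriv G Γ M A) :
    Fin ((inList D Γ A).length + (sortedBits d).length) → Occ := fun i =>
  if h : (i : ℕ) < (inList D Γ A).length then (inList D Γ A).get ⟨i, h⟩
  else
    (((sortedBits d).get ⟨(i : ℕ) - (inList D Γ A).length, by
      have := i.isLt; omega⟩).1, Slot.goal, ([] : List Bool))

/-- The standard basis vector of `ℂ^(2^k)` indexed by a vector of bits. -/
def basisVec {k : ℕ} (b : Fin k → Bool) : Reg k := WithLp.toLp 2 (fun f => if f = b then 1 else 0)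

/-- `Q(π)`: the values of the bits of `π`, in label order. -/
def bitBools {Γ : Env} {M : Term G} {A : QType} (d : Deriv G Γ M A) :
    Fin (sortedBits d).length → Bool := fun j => ((sortedBits d).get j).2.2

/-- Tensor product of quantum registers. -/
def tensorReg {n k : ℕ} (Q : Reg n) (R : Reg k) : Reg (n + k) := WithLp.toLp 2 (fun f =>
  Q (fun i => f (Fin.castAdd k i)) * R (fun j => f (Fin.natAdd n j)))

/-- The initial state for a quantum register `Q`:
`(Occ⁻(A) · B(π), Q ⊗ Q(π))`. -/
def initState (D : Finset ℕ) {Γ : Env} {M : Term G} {A : QType} (d : Deriv G Γ M A)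
    (Q : Reg (inList D Γ A).length) : TMState :=
  ⟨(inList D Γ A).length + (sortedBits d).length, initToks D d,
    tensorReg Q (basisVec (bitBools d))⟩

/-- The unitary action of a permutation `σ` on `ℂ^(2^m)`,
sending `|b₁ … b_m⟩` to `|b_{σ(1)} … b_{σ(m)}⟩`. -/
def permVec {m : ℕ} (σ : Equiv.Perm (Fin m)) (Q : Reg m) : Reg m :=
  WithLp.toLp 2 (fun f => Q (fun i => f (σ.symm i)))

/-- A final state (for some register and permutation `σ`): the tokens sit at
`σ(Occ⁺(A))`. -/
def FinalShape (D : Finset ℕ) (Γ : Env) (A : QType) (s : TMState) : Prop :=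
  ∃ (h : s.1 = (outList D Γ A).length) (σ : Equiv.Perm (Fin (outList D Γ A).length)),
    ∀ i : Fin s.1, s.2.1 i = (outList D Γ A).get (σ (Fin.cast h i))

/-- `s` is a final state for the register `S` and the permutation `σ` with `S = σ⁻¹(R)`. -/
def FinalFor (D : Finset ℕ) (Γ : Env) (A : QType) (s : TMState)
    (R : Reg (outList D Γ A).length) : Prop :=
  ∃ (h : s.1 = (outList D Γ A).length) (σ : Equiv.Perm (Fin (outList D Γ A).length)),
    (∀ i : Fin s.1, s.2.1 i = (outList D Γ A).get (σ (Fin.cast h i))) ∧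
    cast (congrArg Reg h) s.2.2 = permVec σ.symm R

/-- Reachability: the reflexive-transitive closure of `→_π`. -/
def Reaches (G : GateSet) {Γ : Env} {M : Term G} {A : QType} (d : Deriv G Γ M A) :
    TMState → TMState → Prop :=
  Relation.ReflTransGen (Step G d)

/-- `⟦π⟧(Q) = R` iff the initial state for `Q` rewrites under `→_π` into a final
state for `S` and `σ` with `S = σ⁻¹(R)`. -/
def Computes (D : Finset ℕ) {Γ : Env} {M : Term G} {A : QType} (d : Deriv G Γ M A)
    (Q : Reg (inList D Γ A).length) (R : Reg (outList D Γ A).length) : Prop :=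
  ∃ s : TMState, Reaches G d (initState D d Q) s ∧ FinalFor D Γ A s R

/-! The register never decides which transition is enabled: every rule of `→_π`
constrains only the positions of the tokens, while the register is carried along or
acted upon by a unitary.  Hence the token configurations reachable from an initial
state, and with them the existence of a final state (a condition on tokens alone),
are the same for every register `Q`. -/

def TMState.tokens (s : TMState) : Σ n : ℕ, Fin n → Occ := ⟨s.1, s.2.1⟩

theorem TMState.exists_eq_mk_of_tokens_eq {s : TMState} {n : ℕ} {toks : Fin n → Occ}
    (h : s.tokens = ⟨n, toks⟩) : ∃ Q, s = ⟨n, toks, Q⟩ := by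
  obtain ⟨n', toks', Q'⟩ := s
  obtain ⟨rfl, htoks⟩ := Sigma.mk.inj_iff.mp h
  cases htoks
  exact ⟨Q', rfl⟩

section Simulation

variable {G : GateSet} {Γ : Env} {M : Term G} {A : QType} {d : Deriv G Γ M A}

theorem Step.exists_of_tokens_eq {s t s' : TMState} (h : Step G d s t)
    (hs : s'.tokens = s.tokens) : ∃ t', t'.tokens = t.tokens ∧ Step G d s' t' := by
  obtain ⟨n, toks, Q⟩ := s
  obtain ⟨Q', rfl⟩ := TMState.exists_eq_mk_of_tokens_eq hs
  cases h with
  | single _ _ i o' he => exact ⟨_, by rfl, .single toks Q' i o' he⟩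
  | sync _ toks' _ hg ι hinj harg hres hoth =>
    exact ⟨_, by rfl, .sync toks toks' Q' hg ι hinj harg hres hoth⟩

theorem Reaches.exists_of_tokens_eq {s t s' : TMState} (h : Reaches G d s t)
    (hs : s'.tokens = s.tokens) : ∃ t', t'.tokens = t.tokens ∧ Reaches G d s' t' := by
  induction h with
  | refl => exact ⟨s', hs, .refl⟩
  | tail _ hstep ih =>
    obtain ⟨u', hu', hreach⟩ := ih
    obtain ⟨t', ht', hstep'⟩ := hstep.exists_of_tokens_eq hu'
    exact ⟨t', ht', hreach.tail hstep'⟩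

end Simulation

theorem FinalShape.of_tokens_eq {D : Finset ℕ} {Γ : Env} {A : QType} {s s' : TMState}
    (h : FinalShape D Γ A s) (hs : s'.tokens = s.tokens) : FinalShape D Γ A s' := by
  obtain ⟨n, toks, Q⟩ := s
  obtain ⟨Q', rfl⟩ := TMState.exists_eq_mk_of_tokens_eq hs
  exact h

theorem exists_reaches_finalShape_of_tokens_eq {G : GateSet} {D : Finset ℕ} {Γ : Env}
    {M : Term G} {A : QType} {d : Deriv G Γ M A} {s s' : TMState}
    (hs : s'.tokens = s.tokens)
    (h : ∃ t, Reaches G d s t ∧ FinalShape D Γ A t) :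
    ∃ t', Reaches G d s' t' ∧ FinalShape D Γ A t' := by
  obtain ⟨t, hreach, hfinal⟩ := h
  obtain ⟨t', ht', hreach'⟩ := hreach.exists_of_tokens_eq hs
  exact ⟨t', hreach', hfinal.of_tokens_eq ht'⟩

/-- For every type derivation `π` (of `⊢ M : A`), the partial function `⟦π⟧` is
either always defined or always undefined: whether the initial state for a
(normalised) quantum register `Q` rewrites under `→_π` to a final state does
not depend on `Q`, but only on `π`. -/
theorem defined_independent_of_register (G : GateSet) {M : Term G} {A : QType}
    (d : Deriv G Env.empty M A)
    (hlbl : ((bitsOf d).map (fun t => t.2.1)).Nodup)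
    (Q Q' : Reg (inList ∅ Env.empty A).length) (hQ : ‖Q‖ = 1) (hQ' : ‖Q'‖ = 1) :
    (∃ s : TMState, Reaches G d (initState ∅ d Q) s ∧ FinalShape ∅ Env.empty A s) ↔
    (∃ s : TMState, Reaches G d (initState ∅ d Q') s ∧ FinalShape ∅ Env.empty A s) :=
  ⟨exists_reaches_finalShape_of_tokens_eq rfl, exists_reaches_finalShape_of_tokens_eq rfl⟩

end QL
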